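/- Let {f_i} be a d-decaying system with n ≤ Φ(n) ≤ βn, β > 1, and let Y_{Φ,ε} = {x : Φ(l_n) < a_n(x) ≤ l_{n+1}} with l_n defined recursively via l(n) (minimal with Σ_{i=[Φ(n)]+1}^{l(n)} ξ_i^{1/d−ε} ≥ 1). Then for any δ > 0 there exist l ∈ ℕ and N ∈ ℕ such that for all x, y ∈ Y_{Φ,ε} and all n > N, r_n(x) > (r_{n+l}(y))^{1+δ}, where r_n(z) = |C_n(z)| is the length of the n-th level cylinder containing z. -/

import Mathlib

/-!
The length of a cylinder is squeezed between the products of the derivative bounds,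
`∏ ξ_{a_k} ≤ r_n(a)` and `r_n(b) ≤ ∏ λ_{b_k}`, and the decay hypothesis turns these into
`≳ ∏ a_k^{-(d+η)}` and `≲ ∏ b_k^{-(d-η)}`. The digits of `Y_{Φ,ε}` satisfy
`l_{k+1} < a_k, b_k ≤ l_{k+2} ≤ R l_{k+1}`: the sum defining `l_{k+2}` starts at
`Φ(l_{k+1}) ≤ β l_{k+1}` and has terms `≳ i^{-s}` with `s < 1`. With `Σ_n = ∑_{k<n} log l_{k+1}`
this gives `log r_n(a) ≥ -(d+η) Σ_n - O(n)` and `log r_n(b) ≤ -(d-η) Σ_n + O(n)`, while `l_k ≥ k`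
makes `Σ_n ≥ log n!` superlinear; for small `η` the gap `(1+δ)(d-η) - (d+η) > 0` wins, already
with `L = 0`.
-/

open Set Filter Topology MeasureTheory

/-- A `d`-decaying iterated function system on `[0,1]`: `C¹` maps `f_i` (for `i ≥ 1`)
with derivative `f' i`, satisfying uniform eventual contraction, disjointness of the
open images, and polynomial decay `ξ_i ≍ i^{-d}` of the derivative bounds. -/
structure DDecaying (d : ℝ) where
  f : ℕ → ℝ → ℝ
  f' : ℕ → ℝ → ℝ
  ξ : ℕ → ℝ
  lam : ℕ → ℝ
  hd : 1 < d
  maps : ∀ i : ℕ, 1 ≤ i → MapsTo (f i) (Icc (0:ℝ) 1) (Icc (0:ℝ) 1)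
  hderiv : ∀ i : ℕ, 1 ≤ i → ∀ x ∈ Icc (0:ℝ) 1, HasDerivAt (f i) (f' i x) x
  contract : ∃ m : ℕ, 1 ≤ m ∧ ∃ A : ℝ, 0 < A ∧ A < 1 ∧
    ∀ a : Fin m → ℕ, (∀ j, 1 ≤ a j) → ∀ x ∈ Icc (0:ℝ) 1,
      0 < |deriv ((List.ofFn fun j => f (a j)).foldr (· ∘ ·) id) x| ∧
        |deriv ((List.ofFn fun j => f (a j)).foldr (· ∘ ·) id) x| ≤ A
  derivBounds : ∀ i : ℕ, 1 ≤ i → ∀ x ∈ Icc (0:ℝ) 1, ξ i ≤ |f' i x| ∧ |f' i x| ≤ lam i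
  decay : ∀ ε : ℝ, 0 < ε → ∃ C₁ : ℝ, 0 < C₁ ∧ ∃ C₂ : ℝ, 0 < C₂ ∧ ∀ i : ℕ, 1 ≤ i →
    C₁ / (i : ℝ) ^ (d + ε) ≤ ξ i ∧ lam i ≤ C₂ / (i : ℝ) ^ (d - ε)
  disj : ∀ i j, 1 ≤ i → 1 ≤ j → i ≠ j →
    Disjoint (f i '' Ioo (0:ℝ) 1) (f j '' Ioo (0:ℝ) 1)

variable {d : ℝ}

/-- The composition `f_{a 0} ∘ f_{a 1} ∘ ⋯ ∘ f_{a (n-1)}`. -/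
def DDecaying.comp (S : DDecaying d) (a : ℕ → ℕ) (n : ℕ) : ℝ → ℝ :=
  ((List.range n).map fun k => S.f (a k)).foldr (· ∘ ·) id

/-- The approximating sequence `n ↦ f_{a 0} ∘ ⋯ ∘ f_{a (n-1)} (1)` for the projection `Π`. -/
def DDecaying.projSeq (S : DDecaying d) (a : ℕ → ℕ) (n : ℕ) : ℝ :=
  S.comp a n 1

/-- The `n`-th level cylinder determined by the digits `a 0, …, a (n-1)`. -/
def DDecaying.cyl (S : DDecaying d) (a : ℕ → ℕ) (n : ℕ) : Set ℝ :=
  S.comp a n '' Icc (0:ℝ) 1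

/-- The attractor of the subsystem `{f_i}_{i ≥ k}`. -/
def DDecaying.attractor (S : DDecaying d) (k : ℕ) : Set ℝ :=
  {x | ∃ a : ℕ → ℕ, (∀ n, k ≤ a n) ∧ Tendsto (S.projSeq a) atTop (𝓝 x)}

/-- The set `X_Φ = Π{a : a_{n+1} > Φ(a_n)}` of points all of whose digits grow at rate `Φ`. -/
def DDecaying.XPhi (S : DDecaying d) (Φ : ℕ → ℝ) : Set ℝ :=
  {x | ∃ a : ℕ → ℕ, (∀ n, 1 ≤ a n) ∧ (∀ n, Φ (a n) < (a (n + 1) : ℝ)) ∧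
    Tendsto (S.projSeq a) atTop (𝓝 x)}

open scoped Nat

namespace DDecaying

variable (S : DDecaying d)

lemma ξ_pos {i : ℕ} (hi : 1 ≤ i) : 0 < S.ξ i := by
  obtain ⟨C₁, hC₁, _, _, hdec⟩ := S.decay 1 one_pos
  have : (0 : ℝ) < i := by exact_mod_cast hi
  exact (by positivity : 0 < C₁ / (i : ℝ) ^ (d + 1)).trans_le (hdec i hi).1

lemma lam_pos {i : ℕ} (hi : 1 ≤ i) : 0 < S.lam i := by
  have h := S.derivBounds i hi 0 (left_mem_Icc.2 zero_le_one)
  exact (S.ξ_pos hi).trans_le (h.1.trans h.2)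

private lemma foldr_comp_eq (L : List (ℝ → ℝ)) (g : ℝ → ℝ) :
    L.foldr (· ∘ ·) g = L.foldr (· ∘ ·) id ∘ g := by
  induction L with
  | nil => rfl
  | cons h t ih => simp only [List.foldr_cons, ih]; rfl

lemma comp_succ (a : ℕ → ℕ) (n : ℕ) : S.comp a (n + 1) = S.comp a n ∘ S.f (a n) := by
  rw [DDecaying.comp, List.range_succ, List.map_append, List.foldr_append, foldr_comp_eq]
  rfl

def compDeriv (a : ℕ → ℕ) : ℕ → ℝ → ℝ
  | 0 => fun _ => 1
  | n + 1 => fun x => compDeriv a n (S.f (a n) x) * S.f' (a n) x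

variable {a : ℕ → ℕ}

lemma hasDerivAt_comp (ha : ∀ k, 1 ≤ a k) (n : ℕ) {x : ℝ} (hx : x ∈ Icc (0 : ℝ) 1) :
    HasDerivAt (S.comp a n) (S.compDeriv a n x) x := by
  induction n generalizing x with
  | zero => exact hasDerivAt_id x
  | succ n ih =>
    rw [S.comp_succ, compDeriv]
    exact (ih (S.maps (a n) (ha n) hx)).comp x (S.hderiv (a n) (ha n) x hx)

lemma prod_ξ_le_abs_compDeriv (ha : ∀ k, 1 ≤ a k) (n : ℕ) {x : ℝ} (hx : x ∈ Icc (0 : ℝ) 1) :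
    ∏ k ∈ Finset.range n, S.ξ (a k) ≤ |S.compDeriv a n x| := by
  induction n generalizing x with
  | zero => simp [compDeriv]
  | succ n ih =>
    rw [compDeriv, abs_mul, Finset.prod_range_succ]
    exact mul_le_mul (ih (S.maps (a n) (ha n) hx)) (S.derivBounds (a n) (ha n) x hx).1
      (S.ξ_pos (ha n)).le (abs_nonneg _)

lemma abs_compDeriv_le_prod_lam (ha : ∀ k, 1 ≤ a k) (n : ℕ) {x : ℝ} (hx : x ∈ Icc (0 : ℝ) 1) :
    |S.compDeriv a n x| ≤ ∏ k ∈ Finset.range n, S.lam (a k) := by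
  induction n generalizing x with
  | zero => simp [compDeriv]
  | succ n ih =>
    rw [compDeriv, abs_mul, Finset.prod_range_succ]
    exact mul_le_mul (ih (S.maps (a n) (ha n) hx)) (S.derivBounds (a n) (ha n) x hx).2
      (abs_nonneg _) ((abs_nonneg _).trans (ih (S.maps (a n) (ha n) hx)))

lemma diam_cyl_le_prod_lam (ha : ∀ k, 1 ≤ a k) (n : ℕ) :
    Metric.diam (S.cyl a n) ≤ ∏ k ∈ Finset.range n, S.lam (a k) := by
  have hΛ : 0 ≤ ∏ k ∈ Finset.range n, S.lam (a k) :=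
    Finset.prod_nonneg fun k _ => (S.lam_pos (ha k)).le
  refine Metric.diam_le_of_forall_dist_le hΛ ?_
  rintro _ ⟨x, hx, rfl⟩ _ ⟨y, hy, rfl⟩
  have hlip := (convex_Icc (0 : ℝ) 1).norm_image_sub_le_of_norm_hasDerivWithin_le
    (fun z hz => (S.hasDerivAt_comp ha n hz).hasDerivWithinAt)
    (fun z hz => S.abs_compDeriv_le_prod_lam ha n hz) hy hx
  have hxy : ‖x - y‖ ≤ 1 := by
    rw [Real.norm_eq_abs, abs_sub_le_iff]; constructor <;> linarith [hx.1, hx.2, hy.1, hy.2]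
  rw [dist_eq_norm]
  exact hlip.trans (mul_le_of_le_one_right hΛ hxy)

lemma prod_ξ_le_diam_cyl (ha : ∀ k, 1 ≤ a k) (n : ℕ) :
    ∏ k ∈ Finset.range n, S.ξ (a k) ≤ Metric.diam (S.cyl a n) := by
  have hcont : ContinuousOn (S.comp a n) (Icc 0 1) := fun x hx =>
    (S.hasDerivAt_comp ha n hx).continuousAt.continuousWithinAt
  obtain ⟨c, hc, hslope⟩ := exists_hasDerivAt_eq_slope (S.comp a n) (S.compDeriv a n)
    zero_lt_one hcont fun x hx => S.hasDerivAt_comp ha n (Ioo_subset_Icc_self hx)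
  have hbdd : Bornology.IsBounded (S.cyl a n) :=
    (isCompact_Icc.image_of_continuousOn hcont).isBounded
  calc ∏ k ∈ Finset.range n, S.ξ (a k) ≤ |S.compDeriv a n c| :=
        S.prod_ξ_le_abs_compDeriv ha n (Ioo_subset_Icc_self hc)
    _ = dist (S.comp a n 1) (S.comp a n 0) := by rw [Real.dist_eq, hslope]; simp
    _ ≤ Metric.diam (S.cyl a n) := Metric.dist_le_diam_of_mem hbdd
        (mem_image_of_mem _ (right_mem_Icc.2 zero_le_one))
        (mem_image_of_mem _ (left_mem_Icc.2 zero_le_one))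


lemma le_log_diam_cyl {C p : ℝ} (hC : 0 < C) (hξ : ∀ i : ℕ, 1 ≤ i → C / (i : ℝ) ^ p ≤ S.ξ i)
    (ha : ∀ k, 1 ≤ a k) (n : ℕ) :
    n * Real.log C - p * ∑ k ∈ Finset.range n, Real.log (a k) ≤
      Real.log (Metric.diam (S.cyl a n)) := by
  have hpos : ∀ k, (0 : ℝ) < a k := fun k => by exact_mod_cast ha k
  calc n * Real.log C - p * ∑ k ∈ Finset.range n, Real.log (a k)
      = ∑ k ∈ Finset.range n, Real.log (C / (a k : ℝ) ^ p) := by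
        simp only [Real.log_div hC.ne' (Real.rpow_pos_of_pos (hpos _) p).ne',
          Real.log_rpow (hpos _), Finset.sum_sub_distrib, Finset.sum_const, Finset.card_range,
          nsmul_eq_mul, Finset.mul_sum]
    _ ≤ ∑ k ∈ Finset.range n, Real.log (S.ξ (a k)) := Finset.sum_le_sum fun k _ =>
        Real.log_le_log (div_pos hC (Real.rpow_pos_of_pos (hpos k) p)) (hξ _ (ha k))
    _ = Real.log (∏ k ∈ Finset.range n, S.ξ (a k)) :=
        (Real.log_prod fun k _ => (S.ξ_pos (ha k)).ne').symm
    _ ≤ Real.log (Metric.diam (S.cyl a n)) :=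
        Real.log_le_log (Finset.prod_pos fun k _ => S.ξ_pos (ha k)) (S.prod_ξ_le_diam_cyl ha n)

lemma log_diam_cyl_le {C q : ℝ} (hC : 0 < C) (hlam : ∀ i : ℕ, 1 ≤ i → S.lam i ≤ C / (i : ℝ) ^ q)
    (ha : ∀ k, 1 ≤ a k) (n : ℕ) :
    Real.log (Metric.diam (S.cyl a n)) ≤
      n * Real.log C - q * ∑ k ∈ Finset.range n, Real.log (a k) := by
  have hpos : ∀ k, (0 : ℝ) < a k := fun k => by exact_mod_cast ha k
  calc Real.log (Metric.diam (S.cyl a n))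
      ≤ Real.log (∏ k ∈ Finset.range n, S.lam (a k)) :=
        Real.log_le_log ((Finset.prod_pos fun k _ => S.ξ_pos (ha k)).trans_le
          (S.prod_ξ_le_diam_cyl ha n)) (S.diam_cyl_le_prod_lam ha n)
    _ = ∑ k ∈ Finset.range n, Real.log (S.lam (a k)) :=
        Real.log_prod fun k _ => (S.lam_pos (ha k)).ne'
    _ ≤ ∑ k ∈ Finset.range n, Real.log (C / (a k : ℝ) ^ q) := Finset.sum_le_sum fun k _ =>
        Real.log_le_log (S.lam_pos (ha k)) (hlam _ (ha k))
    _ = n * Real.log C - q * ∑ k ∈ Finset.range n, Real.log (a k) := by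
        simp only [Real.log_div hC.ne' (Real.rpow_pos_of_pos (hpos _) q).ne',
          Real.log_rpow (hpos _), Finset.sum_sub_distrib, Finset.sum_const, Finset.card_range,
          nsmul_eq_mul, Finset.mul_sum]

lemma rpow_diam_cyl_lt_diam_cyl {C₁ C₂ p q r : ℝ} (hC₁ : 0 < C₁) (hC₂ : 0 < C₂) (hr : 0 ≤ r)
    (hξ : ∀ i : ℕ, 1 ≤ i → C₁ / (i : ℝ) ^ p ≤ S.ξ i)
    (hlam : ∀ i : ℕ, 1 ≤ i → S.lam i ≤ C₂ / (i : ℝ) ^ q)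
    {b : ℕ → ℕ} (ha : ∀ k, 1 ≤ a k) (hb : ∀ k, 1 ≤ b k) {n : ℕ}
    (h : r * (n * Real.log C₂ - q * ∑ k ∈ Finset.range n, Real.log (b k)) <
      n * Real.log C₁ - p * ∑ k ∈ Finset.range n, Real.log (a k)) :
    Metric.diam (S.cyl b n) ^ r < Metric.diam (S.cyl a n) := by
  have hpos : ∀ {c : ℕ → ℕ}, (∀ k, 1 ≤ c k) → 0 < Metric.diam (S.cyl c n) := fun hc =>
    (Finset.prod_pos fun k _ => S.ξ_pos (hc k)).trans_le (S.prod_ξ_le_diam_cyl hc n)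
  rw [← Real.log_lt_log_iff (Real.rpow_pos_of_pos (hpos hb) r) (hpos ha),
    Real.log_rpow (hpos hb)]
  calc r * Real.log (Metric.diam (S.cyl b n))
      ≤ r * (n * Real.log C₂ - q * ∑ k ∈ Finset.range n, Real.log (b k)) :=
        mul_le_mul_of_nonneg_left (S.log_diam_cyl_le hC₂ hlam hb n) hr
    _ < _ := h
    _ ≤ _ := S.le_log_diam_cyl hC₁ hξ ha n

end DDecaying

section BlockLength

variable {g : ℕ → ℝ} {M y : ℕ}

lemma lt_of_isLeast_one_le_sum_Icc (h : IsLeast {m : ℕ | 1 ≤ ∑ i ∈ Finset.Icc (M + 1) m, g i} y) :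
    M < y := by
  by_contra! hy
  have h1 := h.1
  simp only [mem_ofPred_eq, Finset.Icc_eq_empty_of_lt (Nat.lt_succ_of_le hy),
    Finset.sum_empty] at h1
  norm_num at h1

variable {c s : ℝ}

lemma le_of_sum_Icc_lt_one (hc : 0 < c) (hs₀ : 0 ≤ s) (hs₁ : s < 1)
    (hg : ∀ i : ℕ, 1 ≤ i → c / (i : ℝ) ^ s ≤ g i) {m : ℕ}
    (h : ∑ i ∈ Finset.Icc (M + 1) m, g i < 1) :
    (m : ℝ) ≤ 2 * M + (2 / c) ^ (1 - s)⁻¹ := by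
  have hm₀ : 0 ≤ (2 / c) ^ (1 - s)⁻¹ := by positivity
  by_cases hmM : m ≤ 2 * M
  · have : (m : ℝ) ≤ 2 * M := by exact_mod_cast hmM
    linarith
  have hm : (0 : ℝ) < m := by exact_mod_cast (by omega : 0 < m)
  have hterm : ∀ i ∈ Finset.Icc (M + 1) m, c / (m : ℝ) ^ s ≤ g i := fun i hi => by
    obtain ⟨hi₁, hi₂⟩ := Finset.mem_Icc.1 hi
    have hi : (0 : ℝ) < i := by exact_mod_cast (by omega : 0 < i)
    exact (div_le_div_of_nonneg_left hc.le (Real.rpow_pos_of_pos hi s)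
      (Real.rpow_le_rpow hi.le (by exact_mod_cast hi₂) hs₀)).trans (hg i (by omega))
  have hcard : ((m : ℝ) - M) * (c / (m : ℝ) ^ s) < 1 := by
    have := (Finset.card_nsmul_le_sum _ _ _ hterm).trans_lt h
    rwa [Nat.card_Icc, nsmul_eq_mul, Nat.cast_sub (by omega), Nat.cast_add_one,
      Nat.cast_add_one, add_sub_add_right_eq_sub] at this
  -- more than half of the `m` terms are `≥ c m^{-s}`, so `c m^{1-s} / 2 < 1`
  have hpow : (m : ℝ) ^ (1 - s) < 2 / c := by
    have hmM' : (m : ℝ) / 2 < m - M := by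
      have : (2 * M : ℝ) < m := by exact_mod_cast not_le.1 hmM
      linarith
    have := mul_lt_mul_of_pos_right hmM' (div_pos hc (Real.rpow_pos_of_pos hm s))
    rw [Real.rpow_sub hm, Real.rpow_one, lt_div_iff₀ hc]
    calc (m : ℝ) / (m : ℝ) ^ s * c = 2 * ((m : ℝ) / 2 * (c / (m : ℝ) ^ s)) := by ring
      _ < 2 := by linarith
  have := (Real.lt_rpow_inv_iff_of_pos hm.le (by positivity) (by linarith)).2 hpow
  linarith

lemma le_of_isLeast_one_le_sum_Icc (hc : 0 < c) (hs₀ : 0 ≤ s) (hs₁ : s < 1)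
    (hg : ∀ i : ℕ, 1 ≤ i → c / (i : ℝ) ^ s ≤ g i)
    (h : IsLeast {m : ℕ | 1 ≤ ∑ i ∈ Finset.Icc (M + 1) m, g i} y) :
    (y : ℝ) ≤ 2 * M + (2 / c) ^ (1 - s)⁻¹ + 1 := by
  have hy := lt_of_isLeast_one_le_sum_Icc h
  have hprev : ∑ i ∈ Finset.Icc (M + 1) (y - 1), g i < 1 :=
    not_le.1 fun hle => absurd (h.2 hle) (by omega)
  have := le_of_sum_Icc_lt_one hc hs₀ hs₁ hg hprev
  rw [Nat.cast_sub (by omega), Nat.cast_one] at this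
  linarith

end BlockLength

/-- The paper's recursion `l_{n+1} = l(l_n)`, with summands `g i` in place of `ξ_i^{1/d-ε}`. -/
def IsBlockSeq (g Φ : ℕ → ℝ) (l : ℕ → ℕ) : Prop :=
  ∀ n : ℕ, 1 ≤ n → IsLeast {m : ℕ | 1 ≤ ∑ i ∈ Finset.Icc (⌊Φ (l n)⌋₊ + 1) m, g i} (l (n + 1))

namespace IsBlockSeq

variable {g Φ : ℕ → ℝ} {l : ℕ → ℕ}

lemma self_le (hl : IsBlockSeq g Φ l) (hΦ : ∀ n : ℕ, 1 ≤ n → (n : ℝ) ≤ Φ n) (hl₁ : 1 ≤ l 1) :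
    ∀ n : ℕ, 1 ≤ n → n ≤ l n := by
  intro n hn
  induction n, hn using Nat.le_induction with
  | base => exact hl₁
  | succ n hn ih =>
    have := Nat.le_floor (hΦ (l n) (by omega))
    have := lt_of_isLeast_one_le_sum_Icc (hl n hn)
    omega

lemma exists_succ_le_mul (hl : IsBlockSeq g Φ l) {β c s : ℝ}
    (hΦ : ∀ n : ℕ, 1 ≤ n → (n : ℝ) ≤ Φ n ∧ Φ n ≤ β * n) (hl₁ : 1 ≤ l 1)
    (hc : 0 < c) (hs₀ : 0 ≤ s) (hs₁ : s < 1) (hg : ∀ i : ℕ, 1 ≤ i → c / (i : ℝ) ^ s ≤ g i) :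
    ∃ R, ∀ n : ℕ, 1 ≤ n → (l (n + 1) : ℝ) ≤ R * l n := by
  have hm₀ : 0 ≤ (2 / c) ^ (1 - s)⁻¹ := by positivity
  refine ⟨2 * β + (2 / c) ^ (1 - s)⁻¹ + 1, fun n hn => ?_⟩
  have hln : (1 : ℝ) ≤ l n := by
    have := hl.self_le (fun n hn => (hΦ n hn).1) hl₁ n hn
    exact_mod_cast (by omega : 1 ≤ l n)
  have hΦn := hΦ (l n) (by exact_mod_cast hln)
  have hM : (⌊Φ (l n)⌋₊ : ℝ) ≤ β * l n := (Nat.floor_le (by linarith [hΦn.1])).trans hΦn.2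
  have := le_of_isLeast_one_le_sum_Icc hc hs₀ hs₁ hg (hl n hn)
  nlinarith

end IsBlockSeq

section Digits

variable {Φ : ℕ → ℝ} {l a : ℕ → ℕ} {R : ℝ}

lemma log_digit_bounds (hΦ : ∀ n : ℕ, 1 ≤ n → (n : ℝ) ≤ Φ n) (hl : ∀ n : ℕ, 1 ≤ n → 1 ≤ l n)
    (hR : ∀ n : ℕ, 1 ≤ n → (l (n + 1) : ℝ) ≤ R * l n) {k : ℕ}
    (ha : Φ (l (k + 1)) < a k ∧ a k ≤ l (k + 2)) :
    1 ≤ a k ∧ Real.log (l (k + 1)) ≤ Real.log (a k) ∧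
      Real.log (a k) ≤ Real.log (l (k + 1)) + Real.log R := by
  have hl₁ : (1 : ℝ) ≤ l (k + 1) := by exact_mod_cast hl (k + 1) (by omega)
  have hlt : (l (k + 1) : ℝ) < a k := (hΦ _ (hl (k + 1) (by omega))).trans_lt ha.1
  have hR₀ : 0 < R := pos_of_mul_pos_left ((zero_lt_one.trans (hl₁.trans_lt hlt)).trans_le
    ((Nat.cast_le.2 ha.2).trans (hR (k + 1) (by omega)))) (by linarith)
  refine ⟨by exact_mod_cast (by linarith : (1 : ℝ) ≤ a k), Real.log_le_log (by linarith) hlt.le, ?_⟩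
  rw [add_comm, ← Real.log_mul hR₀.ne' (by positivity)]
  exact Real.log_le_log (by linarith) ((Nat.cast_le.2 ha.2).trans (hR (k + 1) (by omega)))

lemma sum_log_digits_bounds (hΦ : ∀ n : ℕ, 1 ≤ n → (n : ℝ) ≤ Φ n)
    (hl : ∀ n : ℕ, 1 ≤ n → 1 ≤ l n) (hR : ∀ n : ℕ, 1 ≤ n → (l (n + 1) : ℝ) ≤ R * l n)
    (ha : ∀ k, Φ (l (k + 1)) < a k ∧ a k ≤ l (k + 2)) (n : ℕ) :
    (∀ k, 1 ≤ a k) ∧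
      ∑ k ∈ Finset.range n, Real.log (l (k + 1)) ≤ ∑ k ∈ Finset.range n, Real.log (a k) ∧
      ∑ k ∈ Finset.range n, Real.log (a k) ≤
        ∑ k ∈ Finset.range n, Real.log (l (k + 1)) + n * Real.log R := by
  have hdigit k := log_digit_bounds hΦ hl hR (ha k)
  refine ⟨fun k => (hdigit k).1, Finset.sum_le_sum fun k _ => (hdigit k).2.1, ?_⟩
  calc ∑ k ∈ Finset.range n, Real.log (a k)
      ≤ ∑ k ∈ Finset.range n, (Real.log (l (k + 1)) + Real.log R) :=
        Finset.sum_le_sum fun k _ => (hdigit k).2.2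
    _ = _ := by rw [Finset.sum_add_distrib, Finset.sum_const, Finset.card_range, nsmul_eq_mul]

end Digits

lemma log_factorial_le_sum_log {l : ℕ → ℕ} (hl : ∀ n : ℕ, 1 ≤ n → n ≤ l n) (n : ℕ) :
    Real.log n ! ≤ ∑ k ∈ Finset.range n, Real.log (l (k + 1)) := by
  rw [← Finset.prod_range_add_one_eq_factorial, Nat.cast_prod,
    Real.log_prod fun k _ => by positivity]
  exact Finset.sum_le_sum fun k _ => Real.log_le_log (by positivity)
    (by exact_mod_cast hl (k + 1) (by omega))

lemma eventually_mul_lt_mul_log_factorial (B : ℝ) {c : ℝ} (hc : 0 < c) :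
    ∀ᶠ n : ℕ in atTop, n * B < c * Real.log n ! := by
  filter_upwards [(FloorSemiring.tendsto_pow_div_factorial_atTop (Real.exp (B / c))).eventually
    (gt_mem_nhds one_pos)] with n hn
  have hfact : (0 : ℝ) < n ! := by positivity
  rw [div_lt_one hfact, ← Real.exp_nat_mul, ← Real.log_lt_log_iff (Real.exp_pos _) hfact,
    Real.log_exp] at hn
  calc (n : ℝ) * B = c * (n * (B / c)) := by field_simp
    _ < c * Real.log n ! := mul_lt_mul_of_pos_left hn hc

lemma exists_pos_exponent_slack {d δ ε : ℝ} (hd : 0 < d) (hδ : 0 < δ) (hε : 0 < ε)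
    (hεd : ε < 1 / d) : ∃ η > 0, d + η < (1 + δ) * (d - η) ∧ (d + η) * (1 / d - ε) < 1 := by
  have hεd' : ε * d < 1 := by rwa [lt_div_iff₀ hd] at hεd
  set η := min (δ * d / (2 * (2 + δ))) (ε * d ^ 2)
  have hη : 0 < η := lt_min (by positivity) (by positivity)
  have hη₁ : (2 + δ) * η ≤ δ * d / 2 := by
    have := mul_le_mul_of_nonneg_left (min_le_left (δ * d / (2 * (2 + δ))) (ε * d ^ 2))
      (by positivity : (0 : ℝ) ≤ 2 + δ)
    rwa [show (2 + δ) * (δ * d / (2 * (2 + δ))) = δ * d / 2 by field_simp] at this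
  have hη₂ : η ≤ ε * d ^ 2 := min_le_right _ _
  refine ⟨η, hη, by nlinarith, ?_⟩
  rw [show (d + η) * (1 / d - ε) = 1 - ε * d + η * (1 - ε * d) / d by field_simp,
    ← sub_pos]
  have : η * (1 - ε * d) < ε * d ^ 2 := by nlinarith
  have : η * (1 - ε * d) / d < ε * d := by rw [div_lt_iff₀ hd]; nlinarith
  linarith

lemma rpow_div_le_rpow_of_div_le {C x y p t : ℝ} (hC : 0 ≤ C) (hx : 0 ≤ x) (ht : 0 ≤ t)
    (h : C / x ^ p ≤ y) : C ^ t / x ^ (p * t) ≤ y ^ t := by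
  rw [Real.rpow_mul hx, ← Real.div_rpow hC (by positivity)]
  exact Real.rpow_le_rpow (by positivity) h ht

theorem cylinder_length_comparison_general (d : ℝ) (S : DDecaying d) (β ε : ℝ)
    (hε : 0 < ε) (hεd : ε < 1 / d) (Φ : ℕ → ℝ)
    (hΦ : ∀ n : ℕ, 1 ≤ n → (n : ℝ) ≤ Φ n ∧ Φ n ≤ β * n)
    (K : ℕ) (hK : 1 ≤ K) (l : ℕ → ℕ) (hl1 : l 1 = K)
    (hlrec : ∀ n : ℕ, 1 ≤ n →
      IsLeast {m : ℕ | 1 ≤ ∑ i ∈ Finset.Icc (⌊Φ (l n)⌋₊ + 1) m, S.ξ i ^ (1 / d - ε)}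
        (l (n + 1))) :
    ∀ δ : ℝ, 0 < δ → ∃ L N : ℕ, ∀ a : ℕ → ℕ,
      (∀ n : ℕ, Φ (l (n + 1)) < (a n : ℝ) ∧ a n ≤ l (n + 2)) →
      ∀ b : ℕ → ℕ, (∀ n : ℕ, Φ (l (n + 1)) < (b n : ℝ) ∧ b n ≤ l (n + 2)) →
      ∀ n : ℕ, N < n →
        Metric.diam (S.cyl b (n + L)) ^ (1 + δ) < Metric.diam (S.cyl a n) := by
  intro δ hδ
  have hd : 0 < d := one_pos.trans S.hd
  have hΦ₁ : ∀ n : ℕ, 1 ≤ n → (n : ℝ) ≤ Φ n := fun n hn => (hΦ n hn).1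
  obtain ⟨η, hη, hgap, hs⟩ := exists_pos_exponent_slack hd hδ hε hεd
  obtain ⟨C₁, hC₁, C₂, hC₂, hdecay⟩ := S.decay η hη
  have hK' : 1 ≤ l 1 := hl1 ▸ hK
  have hl : ∀ n : ℕ, 1 ≤ n → n ≤ l n := IsBlockSeq.self_le hlrec hΦ₁ hK'
  have ht : 0 ≤ 1 / d - ε := by linarith
  obtain ⟨R, hR⟩ := IsBlockSeq.exists_succ_le_mul hlrec hΦ hK'
    (Real.rpow_pos_of_pos hC₁ _) (by positivity) hs fun i hi =>
      rpow_div_le_rpow_of_div_le hC₁.le (Nat.cast_nonneg i) ht (hdecay i hi).1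
  have hl₁ : ∀ n : ℕ, 1 ≤ n → 1 ≤ l n := fun n hn => hn.trans (hl n hn)
  obtain ⟨N, hN⟩ := eventually_atTop.1 (eventually_mul_lt_mul_log_factorial
    ((1 + δ) * Real.log C₂ - Real.log C₁ + (d + η) * Real.log R) (sub_pos.2 hgap))
  refine ⟨0, N, fun a ha b hb n hn => ?_⟩
  rw [add_zero]
  obtain ⟨ha₁, -, haR⟩ := sum_log_digits_bounds hΦ₁ hl₁ hR ha n
  obtain ⟨hb₁, hbl, -⟩ := sum_log_digits_bounds hΦ₁ hl₁ hR hb n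
  have hq : 0 ≤ (1 + δ) * (d - η) := by nlinarith
  refine S.rpow_diam_cyl_lt_diam_cyl hC₁ hC₂ (by linarith) (fun i hi => (hdecay i hi).1)
    (fun i hi => (hdecay i hi).2) ha₁ hb₁ ?_
  have hsuper := hN n hn.le
  have hfact := mul_le_mul_of_nonneg_left (log_factorial_le_sum_log hl n) (sub_pos.2 hgap).le
  have hbsum := mul_le_mul_of_nonneg_left hbl hq
  have hasum := mul_le_mul_of_nonneg_left haR (by linarith : 0 ≤ d + η)
  linarith

/-- Lemma (rn): with `n ≤ Φ(n) ≤ βn`, `β > 1`, and `l_1 = K`, `l_{n+1} = l(l_n)` where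
`l(n)` is minimal with `∑_{i=[Φ(n)]+1}^{l(n)} ξ_i^{1/d-ε} ≥ 1`, for every `δ > 0` there
are `L, N` so that for all digit sequences `a, b` in `Y_{Φ,ε}` (i.e. with `n`-th digit in
`(Φ(l_n), l_{n+1}]`) and all `n > N`, the cylinder lengths satisfy
`r_n(a) > (r_{n+L}(b))^{1+δ}`. -/
theorem cylinder_length_comparison (d : ℝ) (S : DDecaying d) (β ε : ℝ) (hβ : 1 < β)
    (hε : 0 < ε) (hεd : ε < 1 / d) (Φ : ℕ → ℝ)
    (hΦ : ∀ n : ℕ, 1 ≤ n → (n : ℝ) ≤ Φ n ∧ Φ n ≤ β * n)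
    (K : ℕ) (hK : 1 ≤ K) (l : ℕ → ℕ) (hl1 : l 1 = K)
    (hlrec : ∀ n : ℕ, 1 ≤ n →
      IsLeast {m : ℕ | 1 ≤ ∑ i ∈ Finset.Icc (⌊Φ (l n)⌋₊ + 1) m, S.ξ i ^ (1 / d - ε)}
        (l (n + 1))) :
    ∀ δ : ℝ, 0 < δ → ∃ L N : ℕ, ∀ a : ℕ → ℕ,
      (∀ n : ℕ, Φ (l (n + 1)) < (a n : ℝ) ∧ a n ≤ l (n + 2)) →
      ∀ b : ℕ → ℕ, (∀ n : ℕ, Φ (l (n + 1)) < (b n : ℝ) ∧ b n ≤ l (n + 2)) →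
      ∀ n : ℕ, N < n →
        Metric.diam (S.cyl b (n + L)) ^ (1 + δ) < Metric.diam (S.cyl a n) :=
  cylinder_length_comparison_general d S β ε hε hεd Φ hΦ K hK l hl1 hlrec
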